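/- arXiv:2605.28380 — 2 statements merged into one kernel-verified Lean document; each statement's English description precedes it below -/
import Mathlib

section
/- Let λ > 0 and let A : E → E be a self-adjoint linear map with 0 ≤ ⟨A v, v⟩ and ⟨A v, v⟩ < λ‖v‖² for all v ≠ 0. Set S := id − λ⁻¹ A. Then S∘A∘S is self-adjoint and positive semidefinite, and its operator norm satisfies ‖S∘A∘S‖ ≤ (4/27)·λ < λ/4. -/
/-!
With `B = λ⁻¹ A` we have `0 ≤ B ≤ 1` in the Loewner order and `S A S = λ (1 - B) B (1 - B)`.
The scalar fact `max_{[0,1]} t (1 - t)² = 4/27` has the operator form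
`4 - 27 (1 - B) B (1 - B) = (3B - 1) (4 - 3B) (3B - 1)`, whose right side is positive as a
congruence of the positive operator `4 - 3B` by the symmetric `3B - 1`. Finally, a positive
operator `T ≤ c` has `‖T‖ ≤ c`, since its norm is the supremum of its Rayleigh quotients.
-/

open scoped ComplexOrder

theorem four_sub_twentySeven_mul_one_sub_mul_mul_one_sub {R : Type*} [Ring R] (b : R) :
    4 - 27 * ((1 - b) * b * (1 - b)) = (3 * b - 1) * (4 - 3 * b) * (3 * b - 1) := by
  grind

namespace ContinuousLinearMap

section RCLike

variable {𝕜 E : Type*} [RCLike 𝕜] [NormedAddCommGroup E] [InnerProductSpace 𝕜 E]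

open RCLike

theorem le_ofReal_smul_one_iff {T : E →L[𝕜] E} (hT : T.IsSymmetric) {c : ℝ} :
    T ≤ (c : 𝕜) • 1 ↔ ∀ x, re (inner 𝕜 (T x) x) ≤ c * ‖x‖ ^ 2 := by
  have hsym : ((c : 𝕜) • 1 - T).IsSymmetric := by
    simpa using (LinearMap.IsSymmetric.one.smul (conj_ofReal c)).sub hT
  simp only [le_def, isPositive_def, hsym, true_and, reApplyInnerSelf_apply, sub_apply,
    smul_apply, one_apply_eq_self, inner_sub_left, inner_smul_left, map_sub, conj_ofReal,
    re_ofReal_mul, inner_self_eq_norm_sq, sub_nonneg]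

theorem norm_le_of_nonneg_of_le_ofReal_smul_one {T : E →L[𝕜] E} {c : ℝ} (hc : 0 ≤ c)
    (h0 : 0 ≤ T) (h1 : T ≤ (c : 𝕜) • 1) : ‖T‖ ≤ c := by
  rw [nonneg_iff_isPositive] at h0
  rw [le_ofReal_smul_one_iff h0.isSymmetric] at h1
  rw [T.norm_eq_iSup_rayleighQuotient h0.isSymmetric]
  refine ciSup_le fun x => ?_
  rw [abs_of_nonneg (div_nonneg (h0.2 x) (by positivity))]
  exact div_le_of_le_mul₀ (by positivity) hc (h1 x)

theorem IsPositive.conj_of_isSymmetric {T S : E →L[𝕜] E} (hT : T.IsPositive)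
    (hS : S.IsSymmetric) : (S * T * S).IsPositive := by
  have hS' : ∀ x y, inner 𝕜 (S x) y = inner 𝕜 x (S y) := hS
  refine (isPositive_iff _).2 ⟨fun x y => ?_, fun x => ?_⟩
  · simp only [toLinearMap_mul, Module.End.mul_apply, coe_coe]
    rw [hS', hT.inner_left_eq_inner_right, hS']
  · show 0 ≤ inner 𝕜 (S (T (S x))) x
    simpa only [hS'] using hT.inner_nonneg_left (S x)

theorem one_sub_mul_mul_one_sub_nonneg {B : E →L[𝕜] E} (h0 : 0 ≤ B) (h1 : B ≤ 1) :
    0 ≤ (1 - B) * B * (1 - B) :=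
  (nonneg_iff_isPositive _).2 <|
    ((nonneg_iff_isPositive B).1 h0).conj_of_isSymmetric h1.isSymmetric

theorem one_sub_mul_mul_one_sub_le {B : E →L[𝕜] E} (h0 : 0 ≤ B) (h1 : B ≤ 1) :
    (1 - B) * B * (1 - B) ≤ (4 / 27 : 𝕜) • 1 := by
  have hsym : (3 * B - 1).IsSymmetric := by
    rw [show (3 : E →L[𝕜] E) * B - 1 = B + B + B - 1 by noncomm_ring]
    simpa using ((h0.isSymmetric.add h0.isSymmetric).add h0.isSymmetric).sub .one
  have hpos : (4 - 3 * B).IsPositive := by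
    rw [show (4 : E →L[𝕜] E) - 3 * B = 1 + (1 - B) + (1 - B) + (1 - B) by grind]
    exact ((isPositive_one.add h1).add h1).add h1
  have hdiff : (4 / 27 : 𝕜) • 1 - (1 - B) * B * (1 - B)
      = (27⁻¹ : 𝕜) • ((3 * B - 1) * (4 - 3 * B) * (3 * B - 1)) := by
    rw [← four_sub_twentySeven_mul_one_sub_mul_mul_one_sub, eq_inv_smul_iff₀ (by norm_num),
      smul_sub, smul_smul, ofNat_smul_eq_nsmul 𝕜 27, nsmul_eq_mul]
    norm_num [ofNat_smul_eq_nsmul 𝕜 4]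
  rw [le_def, hdiff]
  exact (hpos.conj_of_isSymmetric hsym).smul_of_nonneg (by positivity)

end RCLike

theorem one_sub_inv_smul_mul_mul_one_sub_inv_smul_mem_Icc {E : Type*} [NormedAddCommGroup E]
    [InnerProductSpace ℝ E] {A : E →L[ℝ] E} {lam : ℝ} (hlam : 0 < lam) (h0 : 0 ≤ A)
    (h1 : A ≤ lam • 1) :
    (1 - lam⁻¹ • A) * A * (1 - lam⁻¹ • A) ∈ Set.Icc 0 ((4 / 27 * lam) • 1) := by
  set B := lam⁻¹ • A
  have hA : A = lam • B := by simp [B, smul_smul, hlam.ne']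
  have hB0 : 0 ≤ B :=
    (nonneg_iff_isPositive B).2 <| ((nonneg_iff_isPositive A).1 h0).smul_of_nonneg (by positivity)
  have hB1 : B ≤ 1 := by
    rw [le_def, show 1 - B = lam⁻¹ • (lam • 1 - A) by
      rw [smul_sub, smul_smul, inv_mul_cancel₀ hlam.ne', one_smul]]
    exact h1.smul_of_nonneg (by positivity)
  rw [hA, mul_smul_comm, smul_mul_assoc]
  refine ⟨(nonneg_iff_isPositive _).2 ?_, ?_⟩
  · exact ((nonneg_iff_isPositive _).1 (one_sub_mul_mul_one_sub_nonneg hB0 hB1)).smul_of_nonneg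
      hlam.le
  · rw [le_def, mul_comm, ← smul_smul, ← smul_sub]
    exact (one_sub_mul_mul_one_sub_le hB0 hB1).smul_of_nonneg hlam.le

end ContinuousLinearMap

open ContinuousLinearMap in
theorem smoothed_operator_norm_bound_general
    {E : Type*} [NormedAddCommGroup E] [InnerProductSpace ℝ E]
    (lam : ℝ) (hlam : 0 < lam) (A : E →L[ℝ] E)
    (hsym : ∀ x y : E, (inner ℝ (A x) y : ℝ) = inner ℝ x (A y))
    (hpsd : ∀ v : E, 0 ≤ (inner ℝ (A v) v : ℝ))
    (hub : ∀ v : E, v ≠ 0 → (inner ℝ (A v) v : ℝ) < lam * ‖v‖ ^ 2) :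
    ∀ S : E →L[ℝ] E, S = ContinuousLinearMap.id ℝ E - lam⁻¹ • A →
      (∀ x y : E, (inner ℝ ((S.comp (A.comp S)) x) y : ℝ) = inner ℝ x ((S.comp (A.comp S)) y)) ∧
      (∀ v : E, 0 ≤ (inner ℝ ((S.comp (A.comp S)) v) v : ℝ)) ∧
      ‖S.comp (A.comp S)‖ ≤ (4 / 27) * lam ∧
      (4 / 27) * lam < lam / 4 := by
  rintro S rfl
  have hA0 : 0 ≤ A := (nonneg_iff_isPositive A).2 ((isPositive_iff A).2 ⟨hsym, hpsd⟩)
  have hA1 : A ≤ lam • 1 := (le_ofReal_smul_one_iff (𝕜 := ℝ) hsym).2 fun v => by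
    rcases eq_or_ne v 0 with rfl | hv
    · simp
    · exact (hub v hv).le
  obtain ⟨hT0, hT1⟩ := one_sub_inv_smul_mul_mul_one_sub_inv_smul_mem_Icc hlam hA0 hA1
  have hT := (nonneg_iff_isPositive _).1 hT0
  exact ⟨hT.isSymmetric, hT.inner_nonneg_left,
    norm_le_of_nonneg_of_le_ofReal_smul_one (by positivity) hT0 hT1, by linarith⟩

/-- Spectral bound for the smoothed operator: if `A` is self-adjoint with
`0 ≤ ⟨A v, v⟩` for all `v` and `⟨A v, v⟩ < λ‖v‖²` for all `v ≠ 0`, and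
`S = I − λ⁻¹A`, then `S∘A∘S` is self-adjoint positive semidefinite with
`‖S∘A∘S‖ ≤ (4/27)·λ < λ/4`. -/
theorem smoothed_operator_norm_bound
    {E : Type*} [NormedAddCommGroup E] [InnerProductSpace ℝ E]
    [FiniteDimensional ℝ E]
    (lam : ℝ) (hlam : 0 < lam) (A : E →L[ℝ] E)
    (hsym : ∀ x y : E, (inner ℝ (A x) y : ℝ) = inner ℝ x (A y))
    (hpsd : ∀ v : E, 0 ≤ (inner ℝ (A v) v : ℝ))
    (hub : ∀ v : E, v ≠ 0 → (inner ℝ (A v) v : ℝ) < lam * ‖v‖ ^ 2) :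
    ∀ S : E →L[ℝ] E, S = ContinuousLinearMap.id ℝ E - lam⁻¹ • A →
      (∀ x y : E, (inner ℝ ((S.comp (A.comp S)) x) y : ℝ) = inner ℝ x ((S.comp (A.comp S)) y)) ∧
      (∀ v : E, 0 ≤ (inner ℝ ((S.comp (A.comp S)) v) v : ℝ)) ∧
      ‖S.comp (A.comp S)‖ ≤ (4 / 27) * lam ∧
      (4 / 27) * lam < lam / 4 :=
  smoothed_operator_norm_bound_general lam hlam A hsym hpsd hub
end

section
/- Let J ≥ 1, let V_1, …, V_J be finite-dimensional real inner product spaces, and for 1 ≤ j ≤ J−1 let P_j : V_j → V_{j+1} be linear maps with ‖P_j v‖ ≤ ‖v‖ for all v ∈ V_j. Let λ > 0, set λ_j := 4^{j−J}·λ for 1 ≤ j ≤ J, and let A_J : V_J → V_J be a self-adjoint positive semidefinite linear map with ‖A_J‖ < λ = λ_J. Define recursively, for j = J−1 down to 1, S_{j+1} := id_{V_{j+1}} − λ_{j+1}⁻¹·A_{j+1} and A_j := (S_{j+1}∘P_j)† ∘ A_{j+1} ∘ (S_{j+1}∘P_j), where † denotes the adjoint. Then for every 1 ≤ j ≤ J−1,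 the operator A_j is self-adjoint positive semidefinite and ‖A_j‖ ≤ ‖S_{j+1}∘A_{j+1}∘S_{j+1}‖ < 4^{j−J}·λ = λ_j. -/
/-!
If `A` is positive with `‖A‖ < μ` and `S = I − μ⁻¹A`, then `S A S` acts on the spectrum of `A`
as `t ↦ t (1 − t/μ)²`, which on `[0, μ]` is at most `4μ/27 < μ/4` (the maximum is at `t = μ/3`).
Since `S` is self-adjoint, the coarse operator `(S P)† A (S P)` equals `P† (S A S) P`, so a
contraction `P` makes its norm at most `‖S A S‖`. Hence every coarsening step keeps positivity and
divides the norm bound by four, and downward induction from `A_J` gives `‖A_j‖ < 4^(j-J) λ`.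
-/

open ContinuousLinearMap

/-- The prolongator smoother `S = I − λ⁻¹A`. -/
noncomputable def smoother {E : Type*} [NormedAddCommGroup E] [InnerProductSpace ℝ E]
    (lam : ℝ) (A : E →L[ℝ] E) : E →L[ℝ] E :=
  ContinuousLinearMap.id ℝ E - lam⁻¹ • A

open scoped InnerProductSpace InnerProduct

section Operators

variable {E F : Type*} [NormedAddCommGroup E] [InnerProductSpace ℝ E]
  [NormedAddCommGroup F] [InnerProductSpace ℝ F]

namespace ContinuousLinearMap

theorem IsPositive.norm_le_of_inner_le {T : E →L[ℝ] E} (hT : T.IsPositive) {c : ℝ} (hc : 0 ≤ c)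
    (h : ∀ x, ⟪T x, x⟫_ℝ ≤ c * ‖x‖ ^ 2) : ‖T‖ ≤ c := by
  rw [T.norm_eq_iSup_rayleighQuotient hT.isSymmetric]
  refine ciSup_le fun x => ?_
  rw [rayleighQuotient, reApplyInnerSelf_apply, RCLike.re_to_real, abs_div, abs_sq,
    abs_of_nonneg (hT.inner_nonneg_left x)]
  exact div_le_of_le_mul₀ (sq_nonneg _) hc (h x)

theorem norm_adjoint_comp_comp_le [CompleteSpace E] [CompleteSpace F] (T : F →L[ℝ] F)
    {P : E →L[ℝ] F} (hP : ‖P‖ ≤ 1) : ‖P† ∘L T ∘L P‖ ≤ ‖T‖ :=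
  calc ‖P† ∘L T ∘L P‖ ≤ ‖P‖ * (‖T‖ * ‖P‖) := by
        grw [opNorm_comp_le, opNorm_comp_le, adjoint.norm_map]
    _ ≤ 1 * (‖T‖ * 1) := by gcongr
    _ = ‖T‖ := by ring

end ContinuousLinearMap

theorem smoother_apply (μ : ℝ) (A : F →L[ℝ] F) (v : F) : smoother μ A v = v - μ⁻¹ • A v := rfl

theorem isSymmetric_smoother {A : F →L[ℝ] F} (hA : A.IsSymmetric) (μ : ℝ) :
    (smoother μ A).IsSymmetric := fun x y => by
  simp only [coe_coe, smoother_apply, inner_sub_left, inner_sub_right, real_inner_smul_left,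
    real_inner_smul_right, show ⟪A x, y⟫_ℝ = ⟪x, A y⟫_ℝ from hA x y]

theorem isSelfAdjoint_smoother [CompleteSpace F] {A : F →L[ℝ] F} (hA : A.IsSymmetric) (μ : ℝ) :
    IsSelfAdjoint (smoother μ A) :=
  isSelfAdjoint_iff_isSymmetric.mpr (isSymmetric_smoother hA μ)

theorem inner_smoother_conj_le {A : F →L[ℝ] F} (hA : A.IsSymmetric) {μ : ℝ}
    (hμ : 0 < μ) (hAμ : ‖A‖ ≤ μ) (v : F) :
    ⟪(smoother μ A ∘L A ∘L smoother μ A) v, v⟫_ℝ ≤ 4 * μ / 27 * ‖v‖ ^ 2 := by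
  -- `t (μ - t)² = 4μ³/27 - (4μ/3 - t) (t - μ/3)²`, and at `t = A` the last term is
  -- `⟪(4μ/3 - A) w, w⟫ ≥ 0` with `w = (A - μ/3) v`.
  set w := A v - (μ / 3) • v
  have hw : ⟪A w, w⟫_ℝ ≤ 4 * μ / 3 * ⟪w, w⟫_ℝ :=
    calc ⟪A w, w⟫_ℝ ≤ ‖A‖ * ‖w‖ ^ 2 := by
          grw [real_inner_le_norm, le_opNorm]; rw [sq, mul_assoc]
      _ ≤ 4 * μ / 3 * ⟪w, w⟫_ℝ := by rw [real_inner_self_eq_norm_sq]; gcongr; linarith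
  have hS : ∀ x y, ⟪smoother μ A x, y⟫_ℝ = ⟪x, smoother μ A y⟫_ℝ := isSymmetric_smoother hA μ
  have hAA : ⟪A (A v), v⟫_ℝ = ⟪A v, A v⟫_ℝ := hA _ _
  rw [comp_apply, comp_apply, hS]
  simp only [w, smoother_apply, map_sub, map_smul, inner_sub_left, inner_sub_right,
    real_inner_smul_left, real_inner_smul_right, hAA, real_inner_comm v (A v)] at hw ⊢
  rw [← real_inner_self_eq_norm_sq]
  field_simp
  linarith

theorem norm_smoother_conj_lt [CompleteSpace F] {A : F →L[ℝ] F}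
    (hA : A.IsPositive) {μ : ℝ} (hAμ : ‖A‖ < μ) :
    ‖smoother μ A ∘L A ∘L smoother μ A‖ < μ / 4 := by
  have hμ : 0 < μ := (norm_nonneg A).trans_lt hAμ
  have hpos : (smoother μ A ∘L A ∘L smoother μ A).IsPositive := by
    simpa only [(isSelfAdjoint_smoother hA.isSymmetric μ).adjoint_eq]
      using hA.adjoint_conj (smoother μ A)
  calc _ ≤ 4 * μ / 27 :=
        hpos.norm_le_of_inner_le (by positivity) (inner_smoother_conj_le hA.isSymmetric hμ hAμ.le)
    _ < μ / 4 := by linarith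

section CoarseOperator

variable [CompleteSpace E] [CompleteSpace F]

/-- The paper's `A_j` of (5.3) is `coarseOperator λ_{j+1} A_{j+1} I_{j,j+1}`. -/
noncomputable def coarseOperator (μ : ℝ) (A : F →L[ℝ] F) (P : E →L[ℝ] F) : E →L[ℝ] E :=
  (smoother μ A ∘L P)† ∘L A ∘L (smoother μ A ∘L P)

theorem isPositive_coarseOperator {A : F →L[ℝ] F} (hA : A.IsPositive) (μ : ℝ)
    (P : E →L[ℝ] F) : (coarseOperator μ A P).IsPositive :=
  hA.adjoint_conj _

theorem coarseOperator_eq {A : F →L[ℝ] F} (hA : A.IsSymmetric) (μ : ℝ) (P : E →L[ℝ] F) :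
    coarseOperator μ A P = P† ∘L (smoother μ A ∘L A ∘L smoother μ A) ∘L P := by
  rw [coarseOperator, adjoint_comp, (isSelfAdjoint_smoother hA μ).adjoint_eq]
  rfl

theorem norm_coarseOperator_le {A : F →L[ℝ] F} (hA : A.IsSymmetric) (μ : ℝ) {P : E →L[ℝ] F}
    (hP : ‖P‖ ≤ 1) : ‖coarseOperator μ A P‖ ≤ ‖smoother μ A ∘L A ∘L smoother μ A‖ := by
  rw [coarseOperator_eq hA]
  exact norm_adjoint_comp_comp_le _ hP

theorem coarseOperator_step {A : F →L[ℝ] F} (hA : A.IsPositive) {μ : ℝ} (hAμ : ‖A‖ < μ)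
    {P : E →L[ℝ] F} (hP : ‖P‖ ≤ 1) :
    (coarseOperator μ A P).IsPositive ∧
      ‖coarseOperator μ A P‖ ≤ ‖smoother μ A ∘L A ∘L smoother μ A‖ ∧
      ‖smoother μ A ∘L A ∘L smoother μ A‖ < μ / 4 :=
  ⟨isPositive_coarseOperator hA μ P, norm_coarseOperator_le hA.isSymmetric μ hP,
    norm_smoother_conj_lt hA hAμ⟩

end CoarseOperator

end Operators

theorem coarse_level_operator_norm_bound_general
    (V : ℕ → Type*)
    [∀ j, NormedAddCommGroup (V j)] [∀ j, InnerProductSpace ℝ (V j)]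
    [∀ j, FiniteDimensional ℝ (V j)]
    (J : ℕ)
    (P : ∀ j : ℕ, V j →L[ℝ] V (j + 1))
    (hP : ∀ j : ℕ, 1 ≤ j → j ≤ J - 1 → ∀ v : V j, ‖P j v‖ ≤ ‖v‖)
    (lam : ℝ)
    (A : ∀ j : ℕ, V j →L[ℝ] V j)
    (hAJsym : ∀ x y : V J, (inner ℝ (A J x) y : ℝ) = inner ℝ x (A J y))
    (hAJpsd : ∀ v : V J, 0 ≤ (inner ℝ (A J v) v : ℝ))
    (hAJnorm : ‖A J‖ < lam)
    (hrec : ∀ j : ℕ, 1 ≤ j → j ≤ J - 1 →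
      A j = (adjoint ((smoother ((4 : ℝ) ^ (((j : ℤ) + 1) - (J : ℤ)) * lam) (A (j + 1))).comp (P j))).comp
        ((A (j + 1)).comp
          ((smoother ((4 : ℝ) ^ (((j : ℤ) + 1) - (J : ℤ)) * lam) (A (j + 1))).comp (P j)))) :
    ∀ j : ℕ, 1 ≤ j → j ≤ J - 1 →
      (∀ x y : V j, (inner ℝ (A j x) y : ℝ) = inner ℝ x (A j y)) ∧
      (∀ v : V j, 0 ≤ (inner ℝ (A j v) v : ℝ)) ∧
      ‖A j‖ ≤ ‖(smoother ((4 : ℝ) ^ (((j : ℤ) + 1) - (J : ℤ)) * lam) (A (j + 1))).comp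
          ((A (j + 1)).comp (smoother ((4 : ℝ) ^ (((j : ℤ) + 1) - (J : ℤ)) * lam) (A (j + 1))))‖ ∧
      ‖(smoother ((4 : ℝ) ^ (((j : ℤ) + 1) - (J : ℤ)) * lam) (A (j + 1))).comp
          ((A (j + 1)).comp (smoother ((4 : ℝ) ^ (((j : ℤ) + 1) - (J : ℤ)) * lam) (A (j + 1))))‖
        < (4 : ℝ) ^ ((j : ℤ) - (J : ℤ)) * lam := by
  have hPnorm j (h1 : 1 ≤ j) (h2 : j ≤ J - 1) : ‖P j‖ ≤ 1 :=
    opNorm_le_bound _ zero_le_one fun v => by simpa using hP j h1 h2 v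
  have hcoarse j (h1 : 1 ≤ j) (h2 : j ≤ J - 1) :
      A j = coarseOperator (4 ^ ((j : ℤ) + 1 - J) * lam) (A (j + 1)) (P j) :=
    hrec j h1 h2
  have hscale (j : ℕ) : (4 : ℝ) ^ ((j : ℤ) + 1 - J) * lam / 4 = 4 ^ ((j : ℤ) - J) * lam := by
    rw [add_sub_right_comm, zpow_add_one₀ four_ne_zero]; ring
  have hlevel j (h1 : 1 ≤ j) (hj : j ≤ J) :
      (A j).IsPositive ∧ ‖A j‖ < 4 ^ ((j : ℤ) - J) * lam := by
    refine Nat.decreasingInduction' (fun k hkJ hjk ⟨hA, hAnorm⟩ => ?_) hj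
      ⟨(isPositive_iff _).mpr ⟨hAJsym, hAJpsd⟩, by simpa using hAJnorm⟩
    push_cast at hAnorm
    obtain ⟨hpos, hle, hlt⟩ := coarseOperator_step hA hAnorm (hPnorm k (by omega) (by omega))
    rw [hcoarse k (by omega) (by omega), ← hscale]
    exact ⟨hpos, hle.trans_lt hlt⟩
  intro j h1 h2
  obtain ⟨hA, hAnorm⟩ := hlevel (j + 1) (by omega) (by omega)
  push_cast at hAnorm
  obtain ⟨hpos, hle, hlt⟩ := coarseOperator_step hA hAnorm (hPnorm j h1 h2)
  rw [hcoarse j h1 h2, ← hscale]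
  exact ⟨hpos.isSymmetric, hpos.inner_nonneg_left, hle, hlt⟩

/-- Lemma 5.6 (le_Ajupper), abstractly: given levels `V_1, …, V_J` with
norm-nonincreasing transfer operators `P_j : V_j → V_{j+1}` for `1 ≤ j ≤ J−1`,
`λ_j := 4^{j−J}·λ`, a self-adjoint positive semidefinite fine-level operator `A_J`
with `‖A_J‖ < λ = λ_J`, and the recursively defined coarse operators
`A_j := (S_{j+1}∘P_j)† ∘ A_{j+1} ∘ (S_{j+1}∘P_j)` with `S_{j+1} := I − λ_{j+1}⁻¹ A_{j+1}`,
each `A_j` (for `1 ≤ j ≤ J−1`) is self-adjoint positive semidefinite and satisfies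
`‖A_j‖ ≤ ‖S_{j+1}∘A_{j+1}∘S_{j+1}‖ < 4^{j−J}·λ = λ_j`. -/
theorem coarse_level_operator_norm_bound
    (V : ℕ → Type*)
    [∀ j, NormedAddCommGroup (V j)] [∀ j, InnerProductSpace ℝ (V j)]
    [∀ j, FiniteDimensional ℝ (V j)]
    (J : ℕ) (hJ : 1 ≤ J)
    (P : ∀ j : ℕ, V j →L[ℝ] V (j + 1))
    (hP : ∀ j : ℕ, 1 ≤ j → j ≤ J - 1 → ∀ v : V j, ‖P j v‖ ≤ ‖v‖)
    (lam : ℝ) (hlam : 0 < lam)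
    (A : ∀ j : ℕ, V j →L[ℝ] V j)
    (hAJsym : ∀ x y : V J, (inner ℝ (A J x) y : ℝ) = inner ℝ x (A J y))
    (hAJpsd : ∀ v : V J, 0 ≤ (inner ℝ (A J v) v : ℝ))
    (hAJnorm : ‖A J‖ < lam)
    (hrec : ∀ j : ℕ, 1 ≤ j → j ≤ J - 1 →
      A j = (adjoint ((smoother ((4 : ℝ) ^ (((j : ℤ) + 1) - (J : ℤ)) * lam) (A (j + 1))).comp (P j))).comp
        ((A (j + 1)).comp
          ((smoother ((4 : ℝ) ^ (((j : ℤ) + 1) - (J : ℤ)) * lam) (A (j + 1))).comp (P j)))) :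
    ∀ j : ℕ, 1 ≤ j → j ≤ J - 1 →
      (∀ x y : V j, (inner ℝ (A j x) y : ℝ) = inner ℝ x (A j y)) ∧
      (∀ v : V j, 0 ≤ (inner ℝ (A j v) v : ℝ)) ∧
      ‖A j‖ ≤ ‖(smoother ((4 : ℝ) ^ (((j : ℤ) + 1) - (J : ℤ)) * lam) (A (j + 1))).comp
          ((A (j + 1)).comp (smoother ((4 : ℝ) ^ (((j : ℤ) + 1) - (J : ℤ)) * lam) (A (j + 1))))‖ ∧
      ‖(smoother ((4 : ℝ) ^ (((j : ℤ) + 1) - (J : ℤ)) * lam) (A (j + 1))).comp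
          ((A (j + 1)).comp (smoother ((4 : ℝ) ^ (((j : ℤ) + 1) - (J : ℤ)) * lam) (A (j + 1))))‖
        < (4 : ℝ) ^ ((j : ℤ) - (J : ℤ)) * lam :=
  coarse_level_operator_norm_bound_general V J P hP lam A hAJsym hAJpsd hAJnorm hrec
end
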